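/- arXiv:2110.04926 — 4 statements merged into one kernel-verified Lean document; each statement's English description precedes it below -/
import Mathlib

section
/- Let f : ℝ^n → ℝ be C¹ with L-Lipschitz gradient, and let {x^t} be a sequence with ‖x^t − x^{t−1}‖ ≤ C·α_t for all t, where C > 0 and {α_t} is a positive sequence. Suppose ∑_{t=1}^∞ α_t ‖∇f(x^{t−1})‖² < ∞ and ∑_{t=1}^∞ α_t = ∞, and additionally liminf_{t→∞} ‖∇f(x^t)‖ = 0. Then lim_{t→∞} ‖∇f(x^t)‖ = 0. -/
/-!
If `‖∇f(xᵗ)‖` did not tend to `0`, it would exceed `ε` infinitely often, while divergence of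
`∑ αₜ` together with summability of `∑ αₜ ‖∇f(xᵗ⁻¹)‖²` forces it below `ε / 2` infinitely often.
On each excursion from above `ε` to below `ε / 2` the gradient norm stays `≥ ε / 2`, so the
weights `αₜ` summed over the excursion are controlled by a tail of the convergent series and tend
to `0`; the iterates then move arbitrarily little, and Lipschitz continuity of `∇f` forbids the
jump of size `ε / 2`.
-/

open Filter Topology Finset

theorem frequently_abs_lt_of_summable_mul_sq {u β : ℕ → ℝ} (hβ : ∀ t, 0 ≤ β t)
    (hdiv : ¬Summable β) (hsum : Summable fun t => β t * u t ^ 2) {δ : ℝ} (hδ : 0 < δ) :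
    ∃ᶠ t in atTop, |u t| < δ := by
  refine fun hlarge => hdiv <| (hsum.div_const (δ ^ 2)).of_norm_bounded_eventually_nat ?_
  filter_upwards [hlarge] with t ht
  have hsq : δ ^ 2 ≤ u t ^ 2 := by
    simpa only [sq_abs] using pow_le_pow_left₀ hδ.le (not_lt.mp ht) 2
  rw [Real.norm_of_nonneg (hβ t), le_div_iff₀ (by positivity)]
  exact mul_le_mul_of_nonneg_left hsq (hβ t)

theorem exists_ge_forall_Ico_not_of_frequently {p : ℕ → Prop} (h : ∃ᶠ t in atTop, p t)
    (k : ℕ) : ∃ ℓ, k ≤ ℓ ∧ p ℓ ∧ ∀ t ∈ Ico k ℓ, ¬p t := by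
  classical
  have hex : ∃ t, k ≤ t ∧ p t := frequently_atTop.mp h k
  refine ⟨Nat.find hex, (Nat.find_spec hex).1, (Nat.find_spec hex).2, fun t ht hpt => ?_⟩
  rw [mem_Ico] at ht
  exact Nat.find_min hex ht.2 ⟨ht.1, hpt⟩

theorem tendsto_zero_of_summable_mul_sq {u β : ℕ → ℝ} {K : ℝ} (hβ : ∀ t, 0 ≤ β t)
    (hdiv : ¬Summable β) (hsum : Summable fun t => β t * u t ^ 2)
    (hvar : ∀ s t, s ≤ t → |u s - u t| ≤ K * ∑ i ∈ Ico s t, β i) :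
    Tendsto u atTop (𝓝 0) := by
  rw [Metric.tendsto_atTop]
  intro ε hε
  obtain ⟨δ, hδ, hKδ⟩ := exists_pos_mul_lt (pow_pos (half_pos hε) 3) K
  obtain ⟨N, hN⟩ := Metric.cauchySeq_iff.mp hsum.hasSum.tendsto_sum_nat.cauchySeq δ hδ
  refine ⟨N, fun k hk => ?_⟩
  rw [Real.dist_eq, sub_zero]
  by_contra! hk_large
  obtain ⟨ℓ, hkℓ, hℓ, hgap⟩ := exists_ge_forall_Ico_not_of_frequently
    (frequently_abs_lt_of_summable_mul_sq hβ hdiv hsum (half_pos hε)) k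
  have hgap_sum : (ε / 2) ^ 2 * ∑ i ∈ Ico k ℓ, β i ≤ ∑ i ∈ Ico k ℓ, β i * u i ^ 2 := by
    rw [mul_sum]
    refine sum_le_sum fun t ht => ?_
    have hsq : (ε / 2) ^ 2 ≤ u t ^ 2 := by
      simpa only [sq_abs] using pow_le_pow_left₀ (half_pos hε).le (not_lt.mp (hgap t ht)) 2
    rw [mul_comm]
    exact mul_le_mul_of_nonneg_left hsq (hβ t)
  have htail : ∑ i ∈ Ico k ℓ, β i * u i ^ 2 < δ := by
    have := hN ℓ (hk.trans hkℓ) k hk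
    rw [sum_Ico_eq_sub _ hkℓ]
    exact (le_abs_self _).trans_lt this
  have hjump : ε / 2 < K * ∑ i ∈ Ico k ℓ, β i := by
    have := abs_sub_abs_le_abs_sub (u k) (u ℓ)
    linarith [hvar k ℓ hkℓ]
  have hβsum : 0 ≤ ∑ i ∈ Ico k ℓ, β i := sum_nonneg fun i _ => hβ i
  nlinarith

theorem stmt_4_general {n : ℕ} (f : EuclideanSpace ℝ (Fin n) → ℝ) (L C : ℝ)
    (α : ℕ → ℝ) (x : ℕ → EuclideanSpace ℝ (Fin n))
    (hLip : ∀ y z, ‖gradient f y - gradient f z‖ ≤ L * ‖y - z‖)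
    (hα : ∀ t, 0 < α t)
    (hmove : ∀ t, ‖x (t + 1) - x t‖ ≤ C * α (t + 1))
    (hsum : Summable (fun t => α (t + 1) * ‖gradient f (x t)‖ ^ 2))
    (hdiv : ¬ Summable α) :
    Tendsto (fun t => ‖gradient f (x t)‖) atTop (nhds 0) := by
  have hgrad : LipschitzWith L.toNNReal (gradient f) :=
    .of_dist_le' fun y z => by simpa only [dist_eq_norm] using hLip y z
  have hpath : ∀ s t, s ≤ t → dist (x s) (x t) ≤ C * ∑ i ∈ Ico s t, α (i + 1) := by
    intro s t hst
    rw [mul_sum]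
    exact dist_le_Ico_sum_of_dist_le hst fun {i} _ _ => by
      simpa only [dist_eq_norm, norm_sub_rev] using hmove i
  refine tendsto_zero_of_summable_mul_sq (K := L.toNNReal * C) (fun t => (hα (t + 1)).le)
    (fun h => hdiv ((summable_nat_add_iff 1).mp h)) hsum fun s t hst => ?_
  calc |‖gradient f (x s)‖ - ‖gradient f (x t)‖| ≤ dist (gradient f (x s)) (gradient f (x t)) :=
        abs_norm_sub_norm_le _ _
    _ ≤ L.toNNReal * dist (x s) (x t) := hgrad.dist_le_mul _ _
    _ ≤ L.toNNReal * C * ∑ i ∈ Ico s t, α (i + 1) := by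
        rw [mul_assoc]; exact mul_le_mul_of_nonneg_left (hpath s t hst) L.toNNReal.2

/-- Gap-sequence argument: under summability of α_t‖∇f(x^{t−1})‖², divergence of
∑ α_t, step bound ‖x^t − x^{t−1}‖ ≤ Cα_t, and liminf ‖∇f(x^t)‖ = 0, the full
limit lim ‖∇f(x^t)‖ = 0 holds. -/
theorem stmt_4 {n : ℕ} (f : EuclideanSpace ℝ (Fin n) → ℝ) (L C : ℝ)
    (α : ℕ → ℝ) (x : ℕ → EuclideanSpace ℝ (Fin n))
    (hC1 : ContDiff ℝ 1 f) (hL : 0 < L) (hC : 0 < C)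
    (hLip : ∀ y z, ‖gradient f y - gradient f z‖ ≤ L * ‖y - z‖)
    (hα : ∀ t, 0 < α t)
    (hmove : ∀ t, ‖x (t + 1) - x t‖ ≤ C * α (t + 1))
    (hsum : Summable (fun t => α (t + 1) * ‖gradient f (x t)‖ ^ 2))
    (hdiv : ¬ Summable α)
    (hliminf : Filter.liminf (fun t => ‖gradient f (x t)‖) atTop = 0) :
    Tendsto (fun t => ‖gradient f (x t)‖) atTop (nhds 0) :=
  stmt_4_general f L C α x hLip hα hmove hsum hdiv
end

section
/- Let f : ℝ^n → ℝ be bounded below, and let {x^t}_{t≥0} satisfy f(x^t) ≤ f(x^{t−1}) − (N α_t / 2)‖∇f(x^{t−1})‖² + c·α_t³ for all t ≥ 1, where N, c > 0 and {α_t} are positive with ∑ α_t = ∞ and ∑ α_t³ < ∞. Then {f(x^t)} converges to some f* ∈ ℝ, ∑_{t=1}^∞ α_t ‖∇f(x^{t−1})‖² < ∞, and liminf_{t→∞} ‖∇f(x^t)‖ = 0. -/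
/-!
Adding the summable perturbations back turns the recursion into a telescoping bound: the
nonnegative increments `f(x^t) - f(x^{t+1}) + cα_{t+1}³` have partial sums bounded by
`f(x^0) - inf f` plus a bound for the convergent partial sums of `∑ cα³`, so they are summable. Hence `f(x^t)` converges, and the descent terms
`(Nα_{t+1}/2)‖∇f(x^t)‖²`, which they dominate, are summable. Were `‖∇f(x^t)‖ ≥ ε` eventually,
`∑ α_t` would be dominated by `ε⁻² ∑ α_{t+1}‖∇f(x^t)‖²`, contradicting `∑ α_t = ∞`.
-/

open Filter Topology Finset

section ApproximateDescent

variable {u b : ℕ → ℝ} {m : ℝ}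

theorem summable_sub_succ_add (hm : ∀ t, m ≤ u t) (hb : Summable b)
    (hdec : ∀ t, u (t + 1) ≤ u t + b t) : Summable fun t => u t - u (t + 1) + b t := by
  obtain ⟨B, hB⟩ := hb.hasSum.tendsto_sum_nat.bddAbove_range
  refine summable_of_sum_range_le (c := u 0 - m + B) (fun t => by linarith [hdec t]) fun n => ?_
  rw [sum_add_distrib, sum_range_sub']
  linarith [hm n, hB ⟨n, rfl⟩]

theorem exists_tendsto_of_le_add_summable (hm : ∀ t, m ≤ u t) (hb : Summable b)
    (hdec : ∀ t, u (t + 1) ≤ u t + b t) : ∃ l, Tendsto u atTop (𝓝 l) := by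
  have hpartial := ((summable_sub_succ_add hm hb hdec).sub hb).hasSum.tendsto_sum_nat
  simp only [add_sub_cancel_right, sum_range_sub'] at hpartial
  exact ⟨_, (tendsto_const_nhds.sub hpartial).congr fun n => sub_sub_cancel (u 0) (u n)⟩

theorem summable_of_add_le_add {d : ℕ → ℝ} (hm : ∀ t, m ≤ u t) (hd : ∀ t, 0 ≤ d t)
    (hb : Summable b) (hrec : ∀ t, u (t + 1) + d t ≤ u t + b t) : Summable d :=
  (summable_sub_succ_add hm hb fun t => by linarith [hrec t, hd t]).of_nonneg_of_le hd
    fun t => by linarith [hrec t]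

end ApproximateDescent

theorem frequently_lt_of_summable_mul {w r : ℕ → ℝ} (hw0 : ∀ t, 0 ≤ w t) (hw : ¬Summable w)
    (hwr : Summable fun t => w t * r t) {ε : ℝ} (hε : 0 < ε) : ∃ᶠ t in atTop, r t < ε := by
  refine fun hge => hw (Summable.of_norm_bounded_eventually_nat (hwr.mul_left ε⁻¹) ?_)
  filter_upwards [hge] with t ht
  rw [Real.norm_of_nonneg (hw0 t), le_inv_mul_iff₀ hε, mul_comm]
  exact mul_le_mul_of_nonneg_left (not_lt.mp ht) (hw0 t)

theorem liminf_eq_zero_of_frequently_lt {ι : Type*} {l : Filter ι} {r : ι → ℝ}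
    (h0 : ∀ i, 0 ≤ r i) (h : ∀ ε > 0, ∃ᶠ i in l, r i < ε) : liminf r l = 0 := by
  have hbdd : IsBoundedUnder (· ≥ ·) l r := isBoundedUnder_of ⟨0, h0⟩
  refine le_antisymm (le_of_forall_pos_le_add fun ε hε => ?_) ?_
  · rw [zero_add]
    exact liminf_le_of_frequently_le ((h ε hε).mono fun i => le_of_lt) hbdd
  · exact le_liminf_of_le (IsCoboundedUnder.of_frequently_le ((h 1 one_pos).mono
      fun i => le_of_lt)) (Eventually.of_forall h0)

theorem stmt_5_general {n : ℕ} (f : EuclideanSpace ℝ (Fin n) → ℝ) (N c fmin : ℝ)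
    (α : ℕ → ℝ) (x : ℕ → EuclideanSpace ℝ (Fin n))
    (hN : 0 < N)
    (hbd : ∀ y, fmin ≤ f y)
    (hα : ∀ t, 0 < α t)
    (hdiv : ¬ Summable α)
    (hcube : Summable (fun t => α t ^ 3))
    (hrec : ∀ t, f (x (t + 1)) ≤
      f (x t) - N * α (t + 1) / 2 * ‖gradient f (x t)‖ ^ 2 + c * α (t + 1) ^ 3) :
    (∃ fstar : ℝ, Tendsto (fun t => f (x t)) atTop (nhds fstar)) ∧
    Summable (fun t => α (t + 1) * ‖gradient f (x t)‖ ^ 2) ∧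
    Filter.liminf (fun t => ‖gradient f (x t)‖) atTop = 0 := by
  have hm : ∀ t, fmin ≤ f (x t) := fun t => hbd (x t)
  have hb : Summable fun t => c * α (t + 1) ^ 3 :=
    ((summable_nat_add_iff 1).mpr hcube).mul_left c
  have hdrop : ∀ t, 0 ≤ N / 2 * (α (t + 1) * ‖gradient f (x t)‖ ^ 2) := fun t => by
    have := hα (t + 1); positivity
  have hdescent : Summable fun t => N / 2 * (α (t + 1) * ‖gradient f (x t)‖ ^ 2) :=
    summable_of_add_le_add hm hdrop hb fun t => by linarith [hrec t]
  have hsum : Summable fun t => α (t + 1) * ‖gradient f (x t)‖ ^ 2 :=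
    (summable_mul_left_iff (by positivity)).mp hdescent
  have hdiv' : ¬Summable fun t => α (t + 1) := (summable_nat_add_iff 1).not.mpr hdiv
  refine ⟨exists_tendsto_of_le_add_summable hm hb fun t => ?_, hsum,
    liminf_eq_zero_of_frequently_lt (fun t => norm_nonneg _) fun ε hε => ?_⟩
  · linarith [hrec t, hdrop t]
  · exact (frequently_lt_of_summable_mul (fun t => (hα (t + 1)).le) hdiv' hsum
      (pow_pos hε 2)).mono fun t => lt_of_pow_lt_pow_left₀ 2 hε.le

/-- Approximate descent recursion: f bounded below and
f(x^{t+1}) ≤ f(x^t) − (Nα_{t+1}/2)‖∇f(x^t)‖² + c α_{t+1}³ with ∑α_t = ∞,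
∑α_t³ < ∞ imply convergence of {f(x^t)}, summability of α_t‖∇f(x^{t-1})‖²,
and liminf ‖∇f(x^t)‖ = 0. -/
theorem stmt_5 {n : ℕ} (f : EuclideanSpace ℝ (Fin n) → ℝ) (N c fmin : ℝ)
    (α : ℕ → ℝ) (x : ℕ → EuclideanSpace ℝ (Fin n))
    (hN : 0 < N) (hc : 0 < c)
    (hbd : ∀ y, fmin ≤ f y)
    (hα : ∀ t, 0 < α t)
    (hdiv : ¬ Summable α)
    (hcube : Summable (fun t => α t ^ 3))
    (hrec : ∀ t, f (x (t + 1)) ≤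
      f (x t) - N * α (t + 1) / 2 * ‖gradient f (x t)‖ ^ 2 + c * α (t + 1) ^ 3) :
    (∃ fstar : ℝ, Tendsto (fun t => f (x t)) atTop (nhds fstar)) ∧
    Summable (fun t => α (t + 1) * ‖gradient f (x t)‖ ^ 2) ∧
    Filter.liminf (fun t => ‖gradient f (x t)‖) atTop = 0 :=
  stmt_5_general f N c fmin α x hN hbd hα hdiv hcube hrec
end

section
/- Let θ ∈ (0,1], α > 0, β ≥ 0, and γ ∈ ((1+θ)/(1+3θ), 1], and define α_t = α/(t+β)^γ. Then there exist constants 0 < a ≤ A (depending only on α, β, γ, θ) such that for all k ≥ 1, a·(k+β)^{−ν} ≤ ∑_{t=k}^∞ α_t (∑_{j=t}^∞ α_j³)^θ ≤ A·(k+β)^{−ν}, where ν = (1+3θ)γ − (1+θ). -/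
/-!
By the mean value theorem, `q (a+1)^{-(q+1)} ≤ a^{-q} - (a+1)^{-q} ≤ q a^{-(q+1)}`, so telescoping
shows that for `c ≥ 1` the shifted `p`-series `∑_j (c+j)^{-(q+1)}` lies between `c^{-q}/q` and
`(q+1)/q · c^{-q}`; the same then holds, up to constants, for any series whose terms are
comparable to `m^{-(q+1)}`. Applied with `q = 3γ - 1` this makes the inner tail comparable to
`m^{-(3γ-1)}`, hence each outer term comparable to `m^{-γ-(3γ-1)θ} = m^{-(ν+1)}`, and applied
again with `q = ν` it gives the two-sided bound by `(k+β)^{-ν}`.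
-/

open Real Set Filter Topology

theorem exists_rpow_add_one_sub_rpow_eq {a : ℝ} (s : ℝ) (ha : 0 < a) :
    ∃ x ∈ Ioo a (a + 1), (a + 1) ^ s - a ^ s = s * x ^ (s - 1) := by
  have hcont : ContinuousOn (· ^ s) (Icc a (a + 1)) :=
    continuousOn_id.rpow_const fun x hx => Or.inl (ha.trans_le hx.1).ne'
  have hderiv : ∀ x ∈ Ioo a (a + 1), HasDerivAt (· ^ s) (s * x ^ (s - 1)) x :=
    fun x hx => hasDerivAt_rpow_const (Or.inl (ha.trans hx.1).ne')
  obtain ⟨x, hx, hslope⟩ := exists_hasDerivAt_eq_slope _ _ (lt_add_one a) hcont hderiv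
  exact ⟨x, hx, by simpa using hslope.symm⟩

theorem rpow_neg_sub_rpow_neg_mem_Icc {a q : ℝ} (hq : 0 ≤ q) (ha : 0 < a) :
    a ^ (-q) - (a + 1) ^ (-q) ∈ Icc (q * (a + 1) ^ (-(q + 1))) (q * a ^ (-(q + 1))) := by
  obtain ⟨x, ⟨hax, hxa⟩, hmvt⟩ := exists_rpow_add_one_sub_rpow_eq (-q) ha
  have hdiff : a ^ (-q) - (a + 1) ^ (-q) = q * x ^ (-(q + 1)) := by
    rw [show -(q + 1) = -q - 1 by ring]; linarith
  rw [hdiff]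
  exact ⟨mul_le_mul_of_nonneg_left (rpow_le_rpow_of_nonpos (by linarith) hxa.le (by linarith)) hq,
    mul_le_mul_of_nonneg_left (rpow_le_rpow_of_nonpos ha hax.le (by linarith)) hq⟩

theorem hasSum_sub_succ_of_antitone {f : ℕ → ℝ} (hf : Antitone f)
    (h : Tendsto f atTop (𝓝 0)) : HasSum (fun n => f n - f (n + 1)) (f 0) := by
  refine (hasSum_iff_tendsto_nat_of_nonneg (fun n => sub_nonneg.2 (hf n.le_succ)) _).2 ?_
  simp_rw [Finset.sum_range_sub']
  simpa using (tendsto_const_nhds (x := f 0)).sub h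

section TailOfShiftedPSeries

variable {q c : ℝ}

theorem hasSum_add_nat_rpow_neg_sub (hq : 0 < q) (hc : 0 < c) :
    HasSum (fun j : ℕ => (c + j) ^ (-q) - (c + j + 1) ^ (-q)) (c ^ (-q)) := by
  have hf : Antitone fun j : ℕ => (c + j) ^ (-q) := fun i j hij =>
    rpow_le_rpow_of_nonpos (by positivity) (by gcongr) (by linarith)
  have hlim : Tendsto (fun j : ℕ => (c + j) ^ (-q)) atTop (𝓝 0) :=
    (tendsto_rpow_neg_atTop hq).comp
      (tendsto_atTop_add_const_left _ c tendsto_natCast_atTop_atTop)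
  simpa [add_assoc] using hasSum_sub_succ_of_antitone hf hlim

theorem add_nat_succ_rpow_neg_le (hq : 0 < q) (hc : 0 < c) (j : ℕ) :
    (c + (j + 1 : ℕ)) ^ (-(q + 1)) ≤ ((c + j) ^ (-q) - (c + j + 1) ^ (-q)) / q := by
  rw [le_div_iff₀ hq, mul_comm]
  simpa [add_assoc] using (rpow_neg_sub_rpow_neg_mem_Icc hq.le (by positivity : 0 < c + j)).1

theorem summable_add_nat_rpow_neg (hq : 0 < q) (hc : 0 < c) :
    Summable fun j : ℕ => (c + j) ^ (-(q + 1)) :=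
  (summable_nat_add_iff 1).1 <|
    ((hasSum_add_nat_rpow_neg_sub hq hc).summable.div_const q).of_nonneg_of_le
      (fun j => by positivity) (add_nat_succ_rpow_neg_le hq hc)

theorem rpow_neg_div_le_tsum_add_nat_rpow_neg (hq : 0 < q) (hc : 0 < c) :
    c ^ (-q) / q ≤ ∑' j : ℕ, (c + j) ^ (-(q + 1)) := by
  rw [div_le_iff₀ hq, ← tsum_mul_right]
  refine (hasSum_add_nat_rpow_neg_sub hq hc).tsum_eq.symm.le.trans <|
    Summable.tsum_le_tsum (fun j => ?_) (hasSum_add_nat_rpow_neg_sub hq hc).summable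
      ((summable_add_nat_rpow_neg hq hc).mul_right _)
  rw [mul_comm]
  exact (rpow_neg_sub_rpow_neg_mem_Icc hq.le (by positivity)).2

theorem tsum_add_nat_rpow_neg_le (hq : 0 < q) (hc : 1 ≤ c) :
    ∑' j : ℕ, (c + j) ^ (-(q + 1)) ≤ (q + 1) / q * c ^ (-q) := by
  have hc0 : 0 < c := by linarith
  have hsum := (hasSum_add_nat_rpow_neg_sub hq hc0).div_const q
  have hshift : ∑' j : ℕ, (c + (j + 1 : ℕ)) ^ (-(q + 1)) ≤ c ^ (-q) / q := by
    rw [← hsum.tsum_eq]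
    exact Summable.tsum_le_tsum (add_nat_succ_rpow_neg_le hq hc0)
      ((summable_nat_add_iff 1).2 (summable_add_nat_rpow_neg hq hc0)) hsum.summable
  have hhead : c ^ (-(q + 1)) ≤ c ^ (-q) := rpow_le_rpow_of_exponent_le hc (by linarith)
  rw [(summable_add_nat_rpow_neg hq hc0).tsum_eq_zero_add]
  calc (c + ((0 : ℕ) : ℝ)) ^ (-(q + 1)) + ∑' j : ℕ, (c + (j + 1 : ℕ)) ^ (-(q + 1))
      ≤ c ^ (-q) + c ^ (-q) / q := by simpa using add_le_add hhead hshift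
    _ = (q + 1) / q * c ^ (-q) := by field_simp

end TailOfShiftedPSeries

theorem tsum_comp_add_nat_mem_Icc {f : ℝ → ℝ} {lo hi q c : ℝ} (hq : 0 < q) (hc : 1 ≤ c)
    (hlo : 0 ≤ lo) (hf : ∀ m, 1 ≤ m → f m ∈ Icc (lo * m ^ (-(q + 1))) (hi * m ^ (-(q + 1)))) :
    ∑' t : ℕ, f (c + t) ∈ Icc (lo / q * c ^ (-q)) (hi * (q + 1) / q * c ^ (-q)) := by
  have hc0 : 0 < c := by linarith
  have hft : ∀ t : ℕ, f (c + t) ∈ Icc (lo * (c + t) ^ (-(q + 1))) (hi * (c + t) ^ (-(q + 1))) :=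
    fun t => hf _ (by simpa using le_add_of_le_of_nonneg hc t.cast_nonneg)
  have hhi : 0 ≤ hi := by
    have h1 := hf 1 le_rfl
    simp only [one_rpow, mul_one] at h1
    exact hlo.trans (h1.1.trans h1.2)
  have hg := summable_add_nat_rpow_neg hq hc0
  have hfs : Summable fun t : ℕ => f (c + t) :=
    (hg.mul_left hi).of_nonneg_of_le (fun t => (mul_nonneg hlo (by positivity)).trans (hft t).1)
      fun t => (hft t).2
  constructor
  · calc lo / q * c ^ (-q) = lo * (c ^ (-q) / q) := by ring
      _ ≤ lo * ∑' j : ℕ, (c + j) ^ (-(q + 1)) :=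
        mul_le_mul_of_nonneg_left (rpow_neg_div_le_tsum_add_nat_rpow_neg hq hc0) hlo
      _ ≤ ∑' t : ℕ, f (c + t) := by
        rw [← tsum_mul_left]
        exact Summable.tsum_le_tsum (fun t => (hft t).1) (hg.mul_left lo) hfs
  · calc ∑' t : ℕ, f (c + t) ≤ hi * ∑' j : ℕ, (c + j) ^ (-(q + 1)) := by
          rw [← tsum_mul_left]
          exact Summable.tsum_le_tsum (fun t => (hft t).2) hfs (hg.mul_left hi)
      _ ≤ hi * ((q + 1) / q * c ^ (-q)) :=
        mul_le_mul_of_nonneg_left (tsum_add_nat_rpow_neg_le hq hc) hhi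
      _ = hi * (q + 1) / q * c ^ (-q) := by ring

theorem rpow_mem_Icc_of_mem_Icc_mul_rpow_neg {x lo hi m s θ : ℝ} (hlo : 0 ≤ lo) (hm : 0 < m)
    (hθ : 0 ≤ θ) (hx : x ∈ Icc (lo * m ^ (-s)) (hi * m ^ (-s))) :
    x ^ θ ∈ Icc (lo ^ θ * m ^ (-s * θ)) (hi ^ θ * m ^ (-s * θ)) := by
  have hpow : ∀ b, 0 ≤ b → (b * m ^ (-s)) ^ θ = b ^ θ * m ^ (-s * θ) := fun b hb => by
    rw [mul_rpow hb (by positivity), ← rpow_mul hm.le]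
  have hlox : 0 ≤ lo * m ^ (-s) := by positivity
  have hhi : 0 ≤ hi := hlo.trans (le_of_mul_le_mul_right (hx.1.trans hx.2) (by positivity))
  rw [← hpow lo hlo, ← hpow hi hhi]
  exact ⟨rpow_le_rpow hlox hx.1 hθ, rpow_le_rpow (hlox.trans hx.1) hx.2 hθ⟩

theorem div_rpow_mul_mem_Icc {α γ m y lo hi r : ℝ} (hα : 0 ≤ α) (hm : 0 < m)
    (hy : y ∈ Icc (lo * m ^ r) (hi * m ^ r)) :
    α / m ^ γ * y ∈ Icc (α * lo * m ^ (r - γ)) (α * hi * m ^ (r - γ)) := by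
  have hsplit : ∀ b, α * b * m ^ (r - γ) = α / m ^ γ * (b * m ^ r) := fun b => by
    rw [rpow_sub hm]; ring
  rw [hsplit, hsplit]
  have hαm : 0 ≤ α / m ^ γ := by positivity
  exact ⟨mul_le_mul_of_nonneg_left hy.1 hαm, mul_le_mul_of_nonneg_left hy.2 hαm⟩

theorem tsum_cube_div_add_nat_rpow_mem_Icc {α γ m : ℝ} (hα : 0 ≤ α) (hγ : 0 < 3 * γ - 1)
    (hm : 1 ≤ m) :
    ∑' j : ℕ, (α / (m + j) ^ γ) ^ 3 ∈ Icc (α ^ 3 / (3 * γ - 1) * m ^ (-(3 * γ - 1)))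
      (α ^ 3 * (3 * γ - 1 + 1) / (3 * γ - 1) * m ^ (-(3 * γ - 1))) := by
  refine tsum_comp_add_nat_mem_Icc (f := fun x => (α / x ^ γ) ^ 3) (lo := α ^ 3) (hi := α ^ 3)
    hγ hm (by positivity) fun x hx => ?_
  have hcube : (α / x ^ γ) ^ 3 = α ^ 3 * x ^ (-(3 * γ - 1 + 1)) := by
    rw [div_pow, ← rpow_natCast (x ^ γ), ← rpow_mul (by linarith), div_eq_mul_inv,
      ← rpow_neg (by linarith)]
    ring_nf
  simp [hcube]

theorem exists_div_rpow_mul_tsum_cube_rpow_mem_Icc {α γ θ : ℝ} (hα : 0 < α)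
    (hγ : 0 < 3 * γ - 1) (hθ : 0 ≤ θ) :
    ∃ lo hi : ℝ, 0 < lo ∧ lo ≤ hi ∧ ∀ m, 1 ≤ m →
      α / m ^ γ * (∑' j : ℕ, (α / (m + j) ^ γ) ^ 3) ^ θ ∈
        Icc (lo * m ^ (-(3 * γ - 1) * θ - γ)) (hi * m ^ (-(3 * γ - 1) * θ - γ)) := by
  refine ⟨α * (α ^ 3 / (3 * γ - 1)) ^ θ, α * (α ^ 3 * (3 * γ - 1 + 1) / (3 * γ - 1)) ^ θ,
    by positivity, ?_, fun m hm => ?_⟩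
  · gcongr
    exact le_mul_of_one_le_right (by positivity) (by linarith)
  · exact div_rpow_mul_mem_Icc hα.le (by linarith) <|
      rpow_mem_Icc_of_mem_Icc_mul_rpow_neg (by positivity) (by linarith) hθ
        (tsum_cube_div_add_nat_rpow_mem_Icc hα.le hγ hm)

theorem stmt_8_general (θ α β γ : ℝ) (hθ0 : 0 < θ)
    (hα : 0 < α) (hβ : 0 ≤ β)
    (hγ1 : (1 + θ) / (1 + 3 * θ) < γ) :
    ∃ a A : ℝ, 0 < a ∧ a ≤ A ∧ ∀ k : ℕ, 1 ≤ k →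
      a * ((k : ℝ) + β) ^ (-((1 + 3 * θ) * γ - (1 + θ))) ≤
        (∑' t : ℕ, (α / (((k + t : ℕ) : ℝ) + β) ^ γ) *
          (∑' j : ℕ, (α / (((k + t + j : ℕ) : ℝ) + β) ^ γ) ^ 3) ^ θ) ∧
      (∑' t : ℕ, (α / (((k + t : ℕ) : ℝ) + β) ^ γ) *
          (∑' j : ℕ, (α / (((k + t + j : ℕ) : ℝ) + β) ^ γ) ^ 3) ^ θ) ≤
        A * ((k : ℝ) + β) ^ (-((1 + 3 * θ) * γ - (1 + θ))) := by
  set ν := (1 + 3 * θ) * γ - (1 + θ)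
  have hν : 0 < ν := by rw [div_lt_iff₀ (by linarith)] at hγ1; linarith
  have hγ : 0 < 3 * γ - 1 := by nlinarith
  obtain ⟨lo, hi, hlo, hlohi, hterm⟩ := exists_div_rpow_mul_tsum_cube_rpow_mem_Icc hα hγ hθ0.le
  rw [show -(3 * γ - 1) * θ - γ = -(ν + 1) by ring] at hterm
  refine ⟨lo / ν, hi * (ν + 1) / ν, by positivity, ?_, fun k hk => ?_⟩
  · exact div_le_div_of_nonneg_right
      (hlohi.trans (le_mul_of_one_le_right (hlo.le.trans hlohi) (by linarith))) hν.le
  · have hc : 1 ≤ (k : ℝ) + β := by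
      have : (1 : ℝ) ≤ k := by exact_mod_cast hk
      linarith
    -- rewrite `((k + t + j : ℕ) : ℝ) + β` as `(k + β) + t + j`
    simp_rw [Nat.cast_add, add_right_comm _ _ β]
    exact tsum_comp_add_nat_mem_Icc hν hc hlo.le hterm

/-- For θ ∈ (0,1], α > 0, β ≥ 0, γ ∈ ((1+θ)/(1+3θ), 1] and α_t = α/(t+β)^γ, the
weighted tail sums ∑_{t=k}^∞ α_t (∑_{j=t}^∞ α_j³)^θ are bounded above and below
by constant multiples of (k+β)^{−ν}, ν = (1+3θ)γ − (1+θ). -/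
theorem stmt_8 (θ α β γ : ℝ) (hθ0 : 0 < θ) (hθ1 : θ ≤ 1)
    (hα : 0 < α) (hβ : 0 ≤ β)
    (hγ1 : (1 + θ) / (1 + 3 * θ) < γ) (hγ2 : γ ≤ 1) :
    ∃ a A : ℝ, 0 < a ∧ a ≤ A ∧ ∀ k : ℕ, 1 ≤ k →
      a * ((k : ℝ) + β) ^ (-((1 + 3 * θ) * γ - (1 + θ))) ≤
        (∑' t : ℕ, (α / (((k + t : ℕ) : ℝ) + β) ^ γ) *
          (∑' j : ℕ, (α / (((k + t + j : ℕ) : ℝ) + β) ^ γ) ^ 3) ^ θ) ∧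
      (∑' t : ℕ, (α / (((k + t : ℕ) : ℝ) + β) ^ γ) *
          (∑' j : ℕ, (α / (((k + t + j : ℕ) : ℝ) + β) ^ γ) ^ 3) ^ θ) ≤
        A * ((k : ℝ) + β) ^ (-((1 + 3 * θ) * γ - (1 + θ))) :=
  stmt_8_general θ α β γ hθ0 hα hβ hγ1
end

section
/- Let {z_k}_{k≥1} be nonnegative reals, b ≥ 0, d, q > 0, s ∈ (0,1), τ > s, and suppose z_{k+1} ≤ (1 − q/(k+b)^s) z_k + d/(k+b)^τ for all k ≥ 1. Then limsup_{k→∞} (k+b)^{τ−s} · z_k ≤ d/q; in particular z_k = O(k^{−(τ−s)}). -/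
/-!
Write `t = k + b` and `p = τ - s`. For `M > d/q` the profile `M / t^p` is, for large `t`, a
supersolution of the recursion: Bernoulli's inequality gives `(t+1)^(-p) ≥ t^(-p) (1 - p/t)`, and
the loss `M p / t` is beaten by the gain `(q M - d) / t^s` because `s < 1`. Adding a multiple of
`exp (-(q/(1-s)) t^(1-s))`, a supersolution of the homogeneous recursion, makes the profile
dominate `z` at some starting index and hence, by comparison, from there on. Since
`s < 1` the exponential term is `o(t^(-p))`, so `limsup t^p z_k ≤ M`.
-/

open Filter Real Topology

lemma le_of_affine_recurrence {z v a c : ℕ → ℝ} {K : ℕ} (ha : ∀ k ≥ K, 0 ≤ a k)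
    (hz : ∀ k ≥ K, z (k + 1) ≤ a k * z k + c k) (hv : ∀ k ≥ K, a k * v k + c k ≤ v (k + 1))
    (hK : z K ≤ v K) : ∀ k ≥ K, z k ≤ v k := by
  intro k hk
  induction k, hk using Nat.le_induction with
  | base => exact hK
  | succ k hk ih =>
    calc z (k + 1) ≤ a k * z k + c k := hz k hk
      _ ≤ a k * v k + c k := by gcongr; exact ha k hk
      _ ≤ v (k + 1) := hv k hk

lemma one_add_rpow_le_exp_mul {x p : ℝ} (hx : 0 ≤ x) (hp : 0 ≤ p) :
    (1 + x) ^ p ≤ exp (x * p) := by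
  rw [exp_mul]
  exact rpow_le_rpow (by linarith) (by linarith [add_one_le_exp x]) hp

lemma rpow_add_one_le {t r : ℝ} (ht : 0 < t) (hr0 : 0 ≤ r) (hr1 : r ≤ 1) :
    (t + 1) ^ r ≤ t ^ r + r * t ^ (r - 1) := by
  have h := rpow_one_add_le_one_add_mul_self (s := t⁻¹) (by linarith [inv_pos.2 ht]) hr0 hr1
  calc (t + 1) ^ r = t ^ r * (1 + t⁻¹) ^ r := by
        rw [← mul_rpow ht.le (by positivity)]; congr 1; field_simp
    _ ≤ t ^ r * (1 + r * t⁻¹) := by gcongr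
    _ = t ^ r + r * t ^ (r - 1) := by rw [rpow_sub_one ht.ne']; ring

lemma rpow_supersolution {t M p s q d : ℝ} (ht : 0 < t) (hM : 0 ≤ M) (hp : 0 ≤ p)
    (h : M * p ≤ (q * M - d) * t ^ (1 - s)) :
    (1 - q / t ^ s) * (M / t ^ p) + d / t ^ (s + p) ≤ M / (t + 1) ^ p := by
  have hrs : t ^ (1 - s) * t ^ s = t := by rw [← rpow_add ht]; simp
  have hexp : (t + 1) ^ p ≤ t ^ p * exp (t⁻¹ * p) := by
    calc (t + 1) ^ p = t ^ p * (1 + t⁻¹) ^ p := by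
          rw [← mul_rpow ht.le (by positivity)]; congr 1; field_simp
      _ ≤ t ^ p * exp (t⁻¹ * p) := by gcongr; exact one_add_rpow_le_exp_mul (by positivity) hp
  calc (1 - q / t ^ s) * (M / t ^ p) + d / t ^ (s + p)
      ≤ M / t ^ p * (1 - t⁻¹ * p) := by
        rw [← sub_nonneg, rpow_add ht, show t⁻¹ = (t ^ (1 - s) * t ^ s)⁻¹ by rw [hrs]]
        have key : M / t ^ p * (1 - (t ^ (1 - s) * t ^ s)⁻¹ * p)
            - ((1 - q / t ^ s) * (M / t ^ p) + d / (t ^ s * t ^ p))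
            = ((q * M - d) * t ^ (1 - s) - M * p) / (t ^ (1 - s) * t ^ s * t ^ p) := by
          field_simp; ring
        rw [key]
        exact div_nonneg (by linarith) (by positivity)
    _ ≤ M / t ^ p * exp (-(t⁻¹ * p)) := by gcongr; linarith [add_one_le_exp (-(t⁻¹ * p))]
    _ = M / (t ^ p * exp (t⁻¹ * p)) := by rw [exp_neg]; field_simp
    _ ≤ M / (t + 1) ^ p := by gcongr

lemma exp_supersolution {t q s : ℝ} (ht : 0 < t) (hq : 0 ≤ q) (hs0 : 0 ≤ s) (hs1 : s < 1) :
    (1 - q / t ^ s) * exp (-(q / (1 - s)) * t ^ (1 - s))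
      ≤ exp (-(q / (1 - s)) * (t + 1) ^ (1 - s)) := by
  have hc : 0 ≤ q / (1 - s) := div_nonneg hq (by linarith)
  have hconc := rpow_add_one_le ht (r := 1 - s) (by linarith) (by linarith)
  have hstep : q / (1 - s) * ((1 - s) * t ^ (1 - s - 1)) = q / t ^ s := by
    have : 1 - s ≠ 0 := by linarith
    rw [show 1 - s - 1 = -s by ring, rpow_neg ht.le]; field_simp
  calc (1 - q / t ^ s) * exp (-(q / (1 - s)) * t ^ (1 - s))
      ≤ exp (-(q / t ^ s)) * exp (-(q / (1 - s)) * t ^ (1 - s)) := by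
        gcongr; linarith [add_one_le_exp (-(q / t ^ s))]
    _ = exp (-(q / (1 - s)) * (t ^ (1 - s) + (1 - s) * t ^ (1 - s - 1))) := by
        rw [← exp_add]; congr 1; rw [← hstep]; ring
    _ ≤ exp (-(q / (1 - s)) * (t + 1) ^ (1 - s)) :=
        exp_le_exp.2 (mul_le_mul_of_nonpos_left hconc (neg_nonpos.2 hc))

lemma tendsto_rpow_mul_exp_neg_mul_rpow_atTop_nhds_zero (p : ℝ) {c r : ℝ} (hc : 0 < c)
    (hr : 0 < r) : Tendsto (fun t => t ^ p * exp (-c * t ^ r)) atTop (𝓝 0) := by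
  refine ((tendsto_rpow_mul_exp_neg_mul_atTop_nhds_zero (p / r) c hc).comp
    (tendsto_rpow_atTop hr)).congr' ?_
  filter_upwards [eventually_gt_atTop 0] with t ht
  simp only [Function.comp, ← rpow_mul ht.le, mul_div_cancel₀ p hr.ne']

/-- By concavity, the exponent `q/(1-s) * t^(1-s)` grows by at most `q / t^s` from `t` to `t + 1`,
so the exponential term absorbs one step of the homogeneous contraction. -/
noncomputable def comparisonProfile (M A p q s t : ℝ) : ℝ :=
  M / t ^ p + A * exp (-(q / (1 - s)) * t ^ (1 - s))

lemma comparisonProfile_supersolution {t M A p s q d : ℝ} (ht : 0 < t) (hM : 0 ≤ M)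
    (hA : 0 ≤ A) (hp : 0 ≤ p) (hq : 0 ≤ q) (hs0 : 0 ≤ s) (hs1 : s < 1)
    (h : M * p ≤ (q * M - d) * t ^ (1 - s)) :
    (1 - q / t ^ s) * comparisonProfile M A p q s t + d / t ^ (s + p)
      ≤ comparisonProfile M A p q s (t + 1) := by
  have hpow := rpow_supersolution ht hM hp h
  have hexp := exp_supersolution ht hq hs0 hs1
  unfold comparisonProfile
  nlinarith

lemma tendsto_rpow_mul_comparisonProfile (M A p : ℝ) {q s : ℝ} (hq : 0 < q) (hs : s < 1) :
    Tendsto (fun t => t ^ p * comparisonProfile M A p q s t) atTop (𝓝 M) := by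
  have hdecay := (tendsto_rpow_mul_exp_neg_mul_rpow_atTop_nhds_zero p
    (div_pos hq (sub_pos.2 hs)) (sub_pos.2 hs)).const_mul A |>.const_add M
  rw [mul_zero, add_zero] at hdecay
  refine hdecay.congr' ?_
  filter_upwards [eventually_gt_atTop 0] with t ht
  have : t ^ p ≠ 0 := (rpow_pos_of_pos ht p).ne'
  unfold comparisonProfile
  field_simp

lemma exists_eventually_le_comparisonProfile {z : ℕ → ℝ} {b d q s p M : ℝ}
    (hz : ∀ k, 0 ≤ z k) (hq : 0 < q) (hs0 : 0 < s) (hs1 : s < 1) (hp : 0 ≤ p) (hM0 : 0 ≤ M)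
    (hM : d < q * M)
    (hrec : ∀ᶠ k in atTop,
      z (k + 1) ≤ (1 - q / ((k : ℝ) + b) ^ s) * z k + d / ((k : ℝ) + b) ^ (s + p)) :
    ∃ A, ∀ᶠ k in atTop, z k ≤ comparisonProfile M A p q s ((k : ℝ) + b) := by
  have htop : Tendsto (fun k : ℕ => (k : ℝ) + b) atTop atTop :=
    tendsto_atTop_add_const_right _ b tendsto_natCast_atTop_atTop
  obtain ⟨K, hK⟩ := eventually_atTop.1 <| hrec.and <| (htop.eventually_gt_atTop 0).and <|
    (((tendsto_rpow_atTop hs0).comp htop).eventually_ge_atTop q).and <|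
    (((tendsto_rpow_atTop (sub_pos.2 hs1)).comp htop).const_mul_atTop
      (sub_pos.2 hM)).eventually_ge_atTop (M * p)
  set A := z K * exp (q / (1 - s) * ((K : ℝ) + b) ^ (1 - s))
  refine ⟨A, eventually_atTop.2 ⟨K, le_of_affine_recurrence
    (a := fun k => 1 - q / ((k : ℝ) + b) ^ s) (c := fun k => d / ((k : ℝ) + b) ^ (s + p))
    ?_ (fun k hk => (hK k hk).1) ?_ ?_⟩⟩
  · intro k hk
    obtain ⟨-, ht, hq_le, -⟩ := hK k hk
    exact sub_nonneg.2 ((div_le_one (rpow_pos_of_pos ht s)).2 hq_le)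
  · intro k hk
    obtain ⟨-, ht, -, hgrowth⟩ := hK k hk
    have hA : 0 ≤ A := mul_nonneg (hz K) (exp_pos _).le
    have := comparisonProfile_supersolution ht hM0 hA hp hq.le hs0.le hs1 hgrowth
    simpa only [Nat.cast_add, Nat.cast_one, add_right_comm _ b 1] using this
  · have hAK : A * exp (-(q / (1 - s)) * ((K : ℝ) + b) ^ (1 - s)) = z K := by
      rw [mul_assoc, ← exp_add, neg_mul, add_neg_cancel, exp_zero, mul_one]
    have : 0 ≤ M / ((K : ℝ) + b) ^ p := div_nonneg hM0 (rpow_nonneg (hK K le_rfl).2.1.le p)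
    simp only [comparisonProfile, hAK]
    linarith

theorem stmt_12_general (z : ℕ → ℝ) (b d q s τ : ℝ)
    (hz : ∀ k, 0 ≤ z k) (hd : 0 < d) (hq : 0 < q)
    (hs0 : 0 < s) (hs1 : s < 1) (hτ : s < τ)
    (hrec : ∀ k : ℕ, 1 ≤ k →
      z (k + 1) ≤ (1 - q / ((k : ℝ) + b) ^ s) * z k + d / ((k : ℝ) + b) ^ τ) :
    Filter.limsup (fun k : ℕ => ((k : ℝ) + b) ^ (τ - s) * z k) atTop ≤ d / q := by
  have htop : Tendsto (fun k : ℕ => (k : ℝ) + b) atTop atTop :=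
    tendsto_atTop_add_const_right _ b tendsto_natCast_atTop_atTop
  have hweight : ∀ᶠ k : ℕ in atTop, 0 ≤ ((k : ℝ) + b) ^ (τ - s) := by
    filter_upwards [htop.eventually_ge_atTop 0] with k hk using rpow_nonneg hk _
  refine le_of_forall_gt_imp_ge_of_dense fun M hM => ?_
  have hM0 : 0 < M := (div_pos hd hq).trans hM
  obtain ⟨A, hzA⟩ := exists_eventually_le_comparisonProfile (d := d) hz hq hs0 hs1
    (sub_pos.2 hτ).le hM0.le (by linarith [(div_lt_iff₀ hq).1 hM])
    (eventually_atTop.2 ⟨1, fun k hk => by simpa only [add_sub_cancel] using hrec k hk⟩)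
  have hv := (tendsto_rpow_mul_comparisonProfile M A (τ - s) hq hs1).comp htop
  calc limsup (fun k : ℕ => ((k : ℝ) + b) ^ (τ - s) * z k) atTop
      ≤ limsup (fun k : ℕ => ((k : ℝ) + b) ^ (τ - s) * comparisonProfile M A (τ - s) q s (k + b))
          atTop := by
        refine limsup_le_limsup ?_ ?_ hv.isBoundedUnder_le
        · filter_upwards [hzA, hweight] with k hk hw using mul_le_mul_of_nonneg_left hk hw
        · refine isCoboundedUnder_le_of_eventually_le atTop (x := 0) ?_
          filter_upwards [hweight] with k hw using mul_nonneg hw (hz k)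
    _ = M := hv.limsup_eq

/-- Polyak-type rate lemma with sublinear contraction:
z_{k+1} ≤ (1 − q/(k+b)^s) z_k + d/(k+b)^τ, s ∈ (0,1), τ > s, implies
limsup (k+b)^{τ−s} z_k ≤ d/q. -/
theorem stmt_12 (z : ℕ → ℝ) (b d q s τ : ℝ)
    (hz : ∀ k, 0 ≤ z k) (hb : 0 ≤ b) (hd : 0 < d) (hq : 0 < q)
    (hs0 : 0 < s) (hs1 : s < 1) (hτ : s < τ)
    (hrec : ∀ k : ℕ, 1 ≤ k →
      z (k + 1) ≤ (1 - q / ((k : ℝ) + b) ^ s) * z k + d / ((k : ℝ) + b) ^ τ) :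
    Filter.limsup (fun k : ℕ => ((k : ℝ) + b) ^ (τ - s) * z k) atTop ≤ d / q :=
  stmt_12_general z b d q s τ hz hd hq hs0 hs1 hτ hrec
end
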